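/- (Uniform monotonicity of the p-Laplacian part of Lemma 4.4) Let p≥2. There exists a constant c_p>0 depending only on p such that for every locally finite graph G=(V,E) with measure μ and every h:V→(0,∞), and for all u1,u2∈W^{1,p}(V) (with weight h), one has ∑_{x∈V} μ(x)[ |∇u1|^{p−2}(x)·Γ(u1,u1−u2)(x) − |∇u2|^{p−2}(x)·Γ(u2,u1−u2)(x) + h(x)·(|u1(x)|^{p−2}u1(x) − |u2(x)|^{p−2}u2(x))·(u1(x)−u2(x)) ] ≥ c_p·‖u1−u2‖_{W^{1,p}}^p, the sum on the left being absolutely convergent. -/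

import Mathlib

open Real

noncomputable section

variable {V : Type*}

/-- The bilinear form Γ on a locally finite graph. -/
def lgam (w : V → V → ℝ) (μ : V → ℝ) (u v : V → ℝ) (x : V) : ℝ :=
  (1 / (2 * μ x)) * ∑' y, w x y * (u y - u x) * (v y - v x)

/-- Length of the gradient: `|∇u|(x) = √(Γ(u,u)(x))`. -/
def lgnorm (w : V → V → ℝ) (μ : V → ℝ) (u : V → ℝ) (x : V) : ℝ :=
  Real.sqrt (lgam w μ u u x)

/-- Degree of a vertex. -/
def ldeg (w : V → V → ℝ) (x : V) : ℝ := ∑' y, w x y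

/-- Membership in the Sobolev space `W^{1,l}(V)` (with weight `h`). -/
def memW1 (w : V → V → ℝ) (μ h : V → ℝ) (l : ℝ) (u : V → ℝ) : Prop :=
  Summable (fun x => μ x * (lgnorm w μ u x ^ l + h x * |u x| ^ l))

/-- The Sobolev norm `‖u‖_{W^{1,l}}` (with weight `h`). -/
def w1norm (w : V → V → ℝ) (μ h : V → ℝ) (l : ℝ) (u : V → ℝ) : ℝ :=
  (∑' x, μ x * (lgnorm w μ u x ^ l + h x * |u x| ^ l)) ^ (1 / l)

/-- The functional Φ̄. -/
def PhiL (w : V → V → ℝ) (μ h1 h2 : V → ℝ) (p q : ℝ) (u v : V → ℝ) : ℝ :=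
  (1 / p) * w1norm w μ h1 p u ^ p + (1 / q) * w1norm w μ h2 q v ^ q

/-- The functional Ψ̄. -/
def PsiL (μ : V → ℝ) (F : V → ℝ → ℝ → ℝ) (u v : V → ℝ) : ℝ :=
  ∑' x, μ x * F x (u x) (v x)

end

/-! At a vertex `x` the discrete gradient of `u` is the vector `(√(w x y / 2μ x) (u y - u x))_y`
indexed by the (finitely many) neighbours `y` of `x`, so `Γ(u, v)(x)` is an inner product and
`|∇u|(x)` a Euclidean norm. The summand at `x` is then `μ x` times the Simon pairing
`⟪‖a‖^{p-2} a - ‖b‖^{p-2} b, a - b⟫` of the two gradients plus `h x` times the same pairing on `ℝ`.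
The Simon inequality with `c_p = 2^{1-p}` bounds it below by `c_p` times the `W^{1,p}` density
of `u1 - u2`, and `|⟪‖a‖^{p-2} a - ‖b‖^{p-2} b, a - b⟫| ≤ 4 (‖a‖^p + ‖b‖^p)` dominates it by the
summable densities of `u1` and `u2`. -/

namespace Real

lemma rpow_eq_rpow_sub_two_mul_sq {x p : ℝ} (hx : 0 ≤ x) (hp : p ≠ 0) :
    x ^ p = x ^ (p - 2) * x ^ 2 := by
  rw [← rpow_add_natCast' hx (by simpa using hp)]
  norm_num

lemma max_rpow_le_rpow_add_rpow {x y p : ℝ} (hx : 0 ≤ x) (hy : 0 ≤ y) (hp : 0 ≤ p) :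
    max x y ^ p ≤ x ^ p + y ^ p := by
  rw [rpow_max hx hy hp]
  exact max_le_add_of_nonneg (rpow_nonneg hx p) (rpow_nonneg hy p)

end Real

open scoped RealInnerProductSpace

section Simon

variable {E : Type*} [SeminormedAddCommGroup E] [InnerProductSpace ℝ E] {p : ℝ}

lemma two_rpow_one_sub_mul_norm_sub_rpow_le_inner (hp : 2 ≤ p) (a b : E) :
    2 ^ (1 - p) * ‖a - b‖ ^ p ≤ ⟪‖a‖ ^ (p - 2) • a - ‖b‖ ^ (p - 2) • b, a - b⟫ := by
  set A := ‖a‖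
  set B := ‖b‖
  have hA : 0 ≤ A := norm_nonneg a
  have hB : 0 ≤ B := norm_nonneg b
  -- The pairing is `½(A^{p-2} + B^{p-2})‖a - b‖² + ½(A^{p-2} - B^{p-2})(A² - B²)`,
  -- whose second term is nonnegative; then `‖a - b‖ ≤ 2 max A B` bounds `‖a - b‖^{p-2}`.
  have hmono : 0 ≤ (A ^ (p - 2) - B ^ (p - 2)) * (A ^ 2 - B ^ 2) := by
    rcases le_total A B with hAB | hBA
    · exact mul_nonneg_of_nonpos_of_nonpos
        (sub_nonpos.2 (rpow_le_rpow hA hAB (by linarith))) (sub_nonpos.2 (by gcongr))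
    · exact mul_nonneg
        (sub_nonneg.2 (rpow_le_rpow hB hBA (by linarith))) (sub_nonneg.2 (by gcongr))
  have hquad : (A ^ (p - 2) + B ^ (p - 2)) / 2 * ‖a - b‖ ^ 2 ≤
      ⟪A ^ (p - 2) • a - B ^ (p - 2) • b, a - b⟫ := by
    rw [norm_sub_sq_real, inner_sub_left, real_inner_smul_left, real_inner_smul_left,
      inner_sub_right, inner_sub_right, real_inner_self_eq_norm_sq, real_inner_self_eq_norm_sq,
      real_inner_comm b a]
    nlinarith
  have hdist : ‖a - b‖ ^ (p - 2) ≤ 2 ^ (p - 2) * (A ^ (p - 2) + B ^ (p - 2)) :=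
    calc ‖a - b‖ ^ (p - 2) ≤ (2 * max A B) ^ (p - 2) := by
          gcongr
          linarith [(norm_sub_le a b : ‖a - b‖ ≤ A + B), le_max_left A B, le_max_right A B]
      _ = 2 ^ (p - 2) * max A B ^ (p - 2) := mul_rpow zero_le_two (le_max_of_le_left hA)
      _ ≤ 2 ^ (p - 2) * (A ^ (p - 2) + B ^ (p - 2)) := by
          gcongr; exact max_rpow_le_rpow_add_rpow hA hB (by linarith)
  have htwo : (2 : ℝ) ^ (1 - p) * 2 ^ (p - 2) = 1 / 2 := by
    rw [← rpow_add zero_lt_two]; norm_num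
  calc 2 ^ (1 - p) * ‖a - b‖ ^ p
      = 2 ^ (1 - p) * ‖a - b‖ ^ (p - 2) * ‖a - b‖ ^ 2 := by
        rw [rpow_eq_rpow_sub_two_mul_sq (norm_nonneg _) (by linarith), mul_assoc]
    _ ≤ 2 ^ (1 - p) * (2 ^ (p - 2) * (A ^ (p - 2) + B ^ (p - 2))) * ‖a - b‖ ^ 2 := by gcongr
    _ = (A ^ (p - 2) + B ^ (p - 2)) / 2 * ‖a - b‖ ^ 2 := by rw [← mul_assoc, htwo]; ring
    _ ≤ _ := hquad

lemma abs_inner_rpow_smul_sub_le (hp : 2 ≤ p) (a b : E) :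
    |⟪‖a‖ ^ (p - 2) • a - ‖b‖ ^ (p - 2) • b, a - b⟫| ≤ 4 * (‖a‖ ^ p + ‖b‖ ^ p) := by
  set A := ‖a‖
  set B := ‖b‖
  set M := max A B
  have hA : 0 ≤ A := norm_nonneg a
  have hB : 0 ≤ B := norm_nonneg b
  have hM : 0 ≤ M := le_max_of_le_left hA
  have hsmul : ∀ c : E, ‖c‖ ≤ M → ‖‖c‖ ^ (p - 2) • c‖ ≤ M ^ (p - 2) * M := fun c hc => by
    rw [norm_smul, norm_of_nonneg (rpow_nonneg (norm_nonneg c) _)]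
    gcongr
  calc |⟪A ^ (p - 2) • a - B ^ (p - 2) • b, a - b⟫|
      ≤ ‖A ^ (p - 2) • a - B ^ (p - 2) • b‖ * ‖a - b‖ := abs_real_inner_le_norm _ _
    _ ≤ (M ^ (p - 2) * M + M ^ (p - 2) * M) * (M + M) := by
        gcongr
        · exact (norm_sub_le _ _).trans (add_le_add (hsmul a (le_max_left A B))
            (hsmul b (le_max_right A B)))
        · exact (norm_sub_le a b).trans (add_le_add (le_max_left A B) (le_max_right A B))
    _ = 4 * M ^ p := by rw [rpow_eq_rpow_sub_two_mul_sq (p := p) hM (by linarith)]; ring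
    _ ≤ 4 * (A ^ p + B ^ p) := by gcongr; exact max_rpow_le_rpow_add_rpow hA hB (by linarith)

lemma real_inner_rpow_smul_sub (s t : ℝ) :
    ⟪‖s‖ ^ (p - 2) • s - ‖t‖ ^ (p - 2) • t, s - t⟫ =
      (|s| ^ (p - 2) * s - |t| ^ (p - 2) * t) * (s - t) := by
  simp only [RCLike.inner_apply, conj_trivial, Real.norm_eq_abs, smul_eq_mul]
  ring

end Simon

lemma summable_and_mul_tsum_le_tsum {ι : Type*} {f g F : ι → ℝ} {c : ℝ} (hc : 0 < c)
    (hg : ∀ i, 0 ≤ g i) (hgf : ∀ i, c * g i ≤ f i) (hfF : ∀ i, |f i| ≤ F i)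
    (hF : Summable F) : Summable f ∧ c * ∑' i, g i ≤ ∑' i, f i := by
  have hf : Summable f := (hF.of_nonneg_of_le (fun i => abs_nonneg _) hfF).of_abs
  have hcg : Summable fun i => c * g i :=
    hF.of_nonneg_of_le (fun i => mul_nonneg hc.le (hg i))
      fun i => (hgf i).trans ((le_abs_self _).trans (hfF i))
  exact ⟨hf, tsum_mul_left.symm.le.trans (hcg.tsum_le_tsum hgf hf)⟩

section Graph

variable {V : Type*} (w : V → V → ℝ) (μ h : V → ℝ) (p : ℝ)

noncomputable def sobolevDensity (u : V → ℝ) (x : V) : ℝ :=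
  μ x * (lgnorm w μ u x ^ p + h x * |u x| ^ p)

noncomputable def monotonicityTerm (u1 u2 : V → ℝ) (x : V) : ℝ :=
  μ x * (lgnorm w μ u1 x ^ (p - 2) * lgam w μ u1 (u1 - u2) x -
    lgnorm w μ u2 x ^ (p - 2) * lgam w μ u2 (u1 - u2) x +
    h x * (|u1 x| ^ (p - 2) * u1 x - |u2 x| ^ (p - 2) * u2 x) * (u1 x - u2 x))

noncomputable def gradVec (x : V) (s : Finset V) (u : V → ℝ) : EuclideanSpace ℝ s :=
  WithLp.toLp 2 fun y => √(w x y / (2 * μ x)) * (u y - u x)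

variable {w μ h p}

lemma gradVec_sub (x : V) (s : Finset V) (u v : V → ℝ) :
    gradVec w μ x s (u - v) = gradVec w μ x s u - gradVec w μ x s v := by
  ext y
  simp only [gradVec, Pi.sub_apply, PiLp.sub_apply]
  ring

lemma lgam_eq_inner_gradVec {x : V} {s : Finset V} (hw : ∀ y, 0 ≤ w x y) (hμ : 0 ≤ μ x)
    (hs : ∀ y ∉ s, w x y = 0) (u v : V → ℝ) :
    lgam w μ u v x = ⟪gradVec w μ x s u, gradVec w μ x s v⟫ := by
  rw [lgam, tsum_eq_sum (s := s) fun y hy => by simp [hs y hy], Finset.mul_sum,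
    PiLp.inner_apply, ← Finset.sum_coe_sort s]
  refine Finset.sum_congr rfl fun y _ => ?_
  have hsq : √(w x y / (2 * μ x)) * √(w x y / (2 * μ x)) = w x y / (2 * μ x) :=
    mul_self_sqrt (div_nonneg (hw y) (by positivity))
  simp only [gradVec, RCLike.inner_apply, conj_trivial]
  linear_combination -(u y - u x) * (v y - v x) * hsq

lemma lgnorm_eq_norm_gradVec {x : V} {s : Finset V} (hw : ∀ y, 0 ≤ w x y) (hμ : 0 ≤ μ x)
    (hs : ∀ y ∉ s, w x y = 0) (u : V → ℝ) :
    lgnorm w μ u x = ‖gradVec w μ x s u‖ := by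
  rw [lgnorm, lgam_eq_inner_gradVec hw hμ hs, real_inner_self_eq_norm_sq, sqrt_sq (norm_nonneg _)]

lemma sobolevDensity_nonneg {x : V} (hμ : 0 ≤ μ x) (hh : 0 ≤ h x) (u : V → ℝ) :
    0 ≤ sobolevDensity w μ h p u x := by
  unfold sobolevDensity lgnorm
  positivity

lemma w1norm_rpow_eq_tsum (hp : 0 < p) (hμ : ∀ x, 0 ≤ μ x) (hh : ∀ x, 0 ≤ h x) (u : V → ℝ) :
    w1norm w μ h p u ^ p = ∑' x, sobolevDensity w μ h p u x := by
  change ((∑' x, sobolevDensity w μ h p u x) ^ (1 / p)) ^ p = _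
  rw [← rpow_mul (tsum_nonneg fun x => sobolevDensity_nonneg (hμ x) (hh x) u),
    one_div_mul_cancel hp.ne', rpow_one]

section Vertex

variable {x : V} {s : Finset V} (hw : ∀ y, 0 ≤ w x y) (hμ : 0 ≤ μ x) (hs : ∀ y ∉ s, w x y = 0)
include hw hμ hs

lemma sobolevDensity_eq_norm_gradVec (u : V → ℝ) :
    sobolevDensity w μ h p u x = μ x * (‖gradVec w μ x s u‖ ^ p + h x * ‖u x‖ ^ p) := by
  rw [sobolevDensity, lgnorm_eq_norm_gradVec hw hμ hs, Real.norm_eq_abs]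

lemma monotonicityTerm_eq_inner_gradVec (u1 u2 : V → ℝ) :
    monotonicityTerm w μ h p u1 u2 x =
      μ x * (⟪‖gradVec w μ x s u1‖ ^ (p - 2) • gradVec w μ x s u1 -
          ‖gradVec w μ x s u2‖ ^ (p - 2) • gradVec w μ x s u2,
          gradVec w μ x s u1 - gradVec w μ x s u2⟫ +
        h x * ⟪‖u1 x‖ ^ (p - 2) • u1 x - ‖u2 x‖ ^ (p - 2) • u2 x, u1 x - u2 x⟫) := by
  rw [monotonicityTerm, real_inner_rpow_smul_sub, lgnorm_eq_norm_gradVec hw hμ hs,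
    lgnorm_eq_norm_gradVec hw hμ hs, lgam_eq_inner_gradVec hw hμ hs,
    lgam_eq_inner_gradVec hw hμ hs, gradVec_sub, inner_sub_left, real_inner_smul_left,
    real_inner_smul_left]
  ring

lemma two_rpow_one_sub_mul_sobolevDensity_sub_le (hp : 2 ≤ p) (hh : 0 ≤ h x) (u1 u2 : V → ℝ) :
    2 ^ (1 - p) * sobolevDensity w μ h p (u1 - u2) x ≤ monotonicityTerm w μ h p u1 u2 x := by
  rw [monotonicityTerm_eq_inner_gradVec hw hμ hs, sobolevDensity_eq_norm_gradVec hw hμ hs,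
    gradVec_sub, Pi.sub_apply]
  calc _ = μ x * (2 ^ (1 - p) * ‖gradVec w μ x s u1 - gradVec w μ x s u2‖ ^ p +
        h x * (2 ^ (1 - p) * ‖u1 x - u2 x‖ ^ p)) := by ring
    _ ≤ _ := by gcongr <;> exact two_rpow_one_sub_mul_norm_sub_rpow_le_inner hp _ _

lemma abs_monotonicityTerm_le (hp : 2 ≤ p) (hh : 0 ≤ h x) (u1 u2 : V → ℝ) :
    |monotonicityTerm w μ h p u1 u2 x| ≤
      4 * (sobolevDensity w μ h p u1 x + sobolevDensity w μ h p u2 x) := by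
  rw [monotonicityTerm_eq_inner_gradVec hw hμ hs, sobolevDensity_eq_norm_gradVec hw hμ hs,
    sobolevDensity_eq_norm_gradVec hw hμ hs, abs_mul, abs_of_nonneg hμ]
  set a := gradVec w μ x s u1
  set b := gradVec w μ x s u2
  calc _ ≤ μ x * (|⟪‖a‖ ^ (p - 2) • a - ‖b‖ ^ (p - 2) • b, a - b⟫| +
        h x * |⟪‖u1 x‖ ^ (p - 2) • u1 x - ‖u2 x‖ ^ (p - 2) • u2 x, u1 x - u2 x⟫|) := by
        gcongr
        exact (abs_add_le _ _).trans_eq (by rw [abs_mul, abs_of_nonneg hh])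
    _ ≤ μ x * (4 * (‖a‖ ^ p + ‖b‖ ^ p) + h x * (4 * (‖u1 x‖ ^ p + ‖u2 x‖ ^ p))) := by
        gcongr <;> exact abs_inner_rpow_smul_sub_le hp _ _
    _ = _ := by ring

end Vertex

end Graph

/-- Uniform monotonicity of the p-Laplacian part of Lemma 4.4. -/
theorem stmt17 (p : ℝ) (hp : 2 ≤ p) :
    ∃ c : ℝ, 0 < c ∧
      ∀ (V : Type) [Countable V] (w : V → V → ℝ) (μ : V → ℝ),
        (∀ x y, w x y = w y x) → (∀ x y, 0 ≤ w x y) → (∀ x, w x x = 0) →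
        (∀ x, {y | 0 < w x y}.Finite) → (∀ x, 0 < μ x) →
        ∀ (h : V → ℝ), (∀ x, 0 < h x) →
        ∀ u1 u2 : V → ℝ, memW1 w μ h p u1 → memW1 w μ h p u2 →
          Summable (fun x => μ x *
            (lgnorm w μ u1 x ^ (p - 2) * lgam w μ u1 (u1 - u2) x -
              lgnorm w μ u2 x ^ (p - 2) * lgam w μ u2 (u1 - u2) x +
              h x * (|u1 x| ^ (p - 2) * u1 x - |u2 x| ^ (p - 2) * u2 x) *
                (u1 x - u2 x))) ∧
          c * w1norm w μ h p (u1 - u2) ^ p ≤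
            ∑' x, μ x *
              (lgnorm w μ u1 x ^ (p - 2) * lgam w μ u1 (u1 - u2) x -
                lgnorm w μ u2 x ^ (p - 2) * lgam w μ u2 (u1 - u2) x +
                h x * (|u1 x| ^ (p - 2) * u1 x - |u2 x| ^ (p - 2) * u2 x) *
                  (u1 x - u2 x)) := by
  refine ⟨2 ^ (1 - p), by positivity, ?_⟩
  intro V _ w μ _ hw _ hfin hμ h hh u1 u2 hu1 hu2
  have hs : ∀ x, ∀ y ∉ (hfin x).toFinset, w x y = 0 := fun x y hy =>
    le_antisymm (not_lt.1 fun hpos => hy ((hfin x).mem_toFinset.2 hpos)) (hw x y)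
  have hμ0 x := (hμ x).le
  have hh0 x := (hh x).le
  rw [w1norm_rpow_eq_tsum (by linarith) hμ0 hh0]
  exact summable_and_mul_tsum_le_tsum (by positivity)
    (fun x => sobolevDensity_nonneg (hμ0 x) (hh0 x) _)
    (fun x => two_rpow_one_sub_mul_sobolevDensity_sub_le (hw x) (hμ0 x) (hs x) hp (hh0 x) u1 u2)
    (fun x => abs_monotonicityTerm_le (hw x) (hμ0 x) (hs x) hp (hh0 x) u1 u2)
    ((hu1.add hu2).mul_left 4)
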